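/- If v_0 ∈ ℂ^d belongs to the balanced convex hull G = cob{v_1,...,v_N}, then the ellipse E(v_0) is contained in the convex hull of the ellipses E(v_1),...,E(v_N). -/

import Mathlib

noncomputable def ellipse {d : ℕ} (a b : EuclideanSpace ℝ (Fin d)) :
    Set (EuclideanSpace ℝ (Fin d)) :=
  {x | ∃ t : ℝ, x = Real.cos t • a + Real.sin t • b}

noncomputable def rePart {d : ℕ} (v : Fin d → ℂ) : EuclideanSpace ℝ (Fin d) :=
  WithLp.toLp 2 (fun i => (v i).re)

noncomputable def imPart {d : ℕ} (v : Fin d → ℂ) : EuclideanSpace ℝ (Fin d) :=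
  WithLp.toLp 2 (fun i => (v i).im)

/-- Balanced convex hull of the finite family `v_1, …, v_N`. -/
def cob {d N : ℕ} (v : Fin N → (Fin d → ℂ)) : Set (Fin d → ℂ) :=
  {w | ∃ z : Fin N → ℂ, (∑ k, ‖z k‖) ≤ 1 ∧ w = ∑ k, z k • v k}

/-!
A point of `E(v₀)` is `Re (e^{it} v₀) = ∑ Re (e^{it} z_k v_k)`. Absorbing the phase of `z_k` into
the rotation, each summand is `|z_k|` times a point of `E(v_k)`; and `0` lies in the convex hull
because each `E(v)` is symmetric. Since `∑ |z_k| ≤ 1`, the sum is a convex combination of such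
points and `0`. Only the real-linearity of `Re` matters, so `E(v)` is treated as the image
`circleImage L v` of the circle orbit of `v` under an arbitrary real-linear map `L`.
-/

open Complex

theorem Convex.sum_smul_mem_of_zero_mem {𝕜 E ι : Type*} [Field 𝕜] [LinearOrder 𝕜]
    [IsStrictOrderedRing 𝕜] [AddCommGroup E] [Module 𝕜 E] {s : Set E} (hs : Convex 𝕜 s)
    (h₀ : (0 : E) ∈ s) {t : Finset ι} {w : ι → 𝕜} {p : ι → E} (hw₀ : ∀ i ∈ t, 0 ≤ w i)
    (hw₁ : ∑ i ∈ t, w i ≤ 1) (hp : ∀ i ∈ t, p i ∈ s) : ∑ i ∈ t, w i • p i ∈ s := by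
  rcases (Finset.sum_nonneg hw₀).eq_or_lt with hW | hW
  · have hw : ∀ i ∈ t, w i = 0 := (Finset.sum_eq_zero_iff_of_nonneg hw₀).1 hW.symm
    rwa [Finset.sum_eq_zero fun i hi => by rw [hw i hi, zero_smul]]
  · have hmem : ∑ i ∈ t, (w i / ∑ j ∈ t, w j) • p i ∈ s :=
      hs.sum_mem (fun i hi => div_nonneg (hw₀ i hi) hW.le)
        (by rw [← Finset.sum_div, div_self hW.ne']) hp
    convert hs.smul_mem_of_zero_mem h₀ hmem ⟨hW.le, hw₁⟩ using 1
    simp only [Finset.smul_sum, smul_smul, mul_div_cancel₀ _ hW.ne']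

section CircleImage

variable {V E : Type*} [AddCommGroup V] [Module ℝ V] [Module ℂ V] [AddCommGroup E] [Module ℝ E]

def circleImage (L : V →ₗ[ℝ] E) (v : V) : Set E :=
  Set.range fun t : ℝ => L (exp (t * I) • v)

theorem exists_mem_circleImage_map_smul_eq [IsScalarTower ℝ ℂ V] (L : V →ₗ[ℝ] E) (z : ℂ)
    (v : V) :
    ∃ p ∈ circleImage L v, L (z • v) = ‖z‖ • p := by
  refine ⟨_, ⟨arg z, rfl⟩, ?_⟩
  rw [← L.map_smul, ← algebraMap_smul ℂ ‖z‖, smul_smul, Complex.coe_algebraMap,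
    norm_mul_exp_arg_mul_I]

theorem zero_mem_convexHull_circleImage (L : V →ₗ[ℝ] E) (v : V) :
    (0 : E) ∈ convexHull ℝ (circleImage L v) := by
  have hv : L v ∈ circleImage L v := ⟨0, by simp⟩
  have hnv : -L v ∈ circleImage L v := ⟨Real.pi, by simp⟩
  simpa using (convex_convexHull ℝ _) (subset_convexHull ℝ _ hv) (subset_convexHull ℝ _ hnv)
    (by norm_num : (0 : ℝ) ≤ 1 / 2) (by norm_num : (0 : ℝ) ≤ 1 / 2) (by norm_num)

theorem circleImage_sum_smul_subset_convexHull [IsScalarTower ℝ ℂ V] {ι : Type*} [Fintype ι]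
    [Nonempty ι] (L : V →ₗ[ℝ] E) (v : ι → V) {z : ι → ℂ} (hz : ∑ k, ‖z k‖ ≤ 1) :
    circleImage L (∑ k, z k • v k) ⊆ convexHull ℝ (⋃ k, circleImage L (v k)) := by
  rintro _ ⟨t, rfl⟩
  dsimp only
  choose p hp hLp using fun k => exists_mem_circleImage_map_smul_eq L (exp (t * I) * z k) (v k)
  have hsub : ∀ k, circleImage L (v k) ⊆ convexHull ℝ (⋃ k, circleImage L (v k)) := fun k =>
    (Set.subset_iUnion (fun k => circleImage L (v k)) k).trans (subset_convexHull ℝ _)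
  have hexp : ∀ k, ‖exp (t * I) * z k‖ = ‖z k‖ := fun k => by
    rw [norm_mul, norm_exp_ofReal_mul_I, one_mul]
  have hsum : L (exp (t * I) • ∑ k, z k • v k) = ∑ k, ‖z k‖ • p k := by
    simp only [Finset.smul_sum, smul_smul, map_sum, hLp, hexp]
  rw [hsum]
  obtain ⟨k₀⟩ := ‹Nonempty ι›
  exact (convex_convexHull ℝ _).sum_smul_mem_of_zero_mem
    (convexHull_mono (Set.subset_iUnion _ k₀) (zero_mem_convexHull_circleImage L (v k₀)))
    (fun k _ => norm_nonneg _) hz (fun k _ => hsub k (hp k))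

end CircleImage

noncomputable def rePartLm (d : ℕ) : (Fin d → ℂ) →ₗ[ℝ] EuclideanSpace ℝ (Fin d) :=
  (WithLp.linearEquiv 2 ℝ (Fin d → ℝ)).symm.toLinearMap ∘ₗ reLm.compLeft (Fin d)

theorem rePartLm_exp_neg_smul {d : ℕ} (w : Fin d → ℂ) (t : ℝ) :
    rePartLm d (exp (-(t * I)) • w) = Real.cos t • rePart w + Real.sin t • imPart w := by
  have hre : (exp (-(t * I))).re = Real.cos t := by
    rw [← neg_mul, ← ofReal_neg, exp_ofReal_mul_I_re, Real.cos_neg]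
  have him : (exp (-(t * I))).im = -Real.sin t := by
    rw [← neg_mul, ← ofReal_neg, exp_ofReal_mul_I_im, Real.sin_neg]
  ext i
  simp [rePartLm, rePart, imPart, mul_re, hre, him]

theorem ellipse_eq_circleImage {d : ℕ} (w : Fin d → ℂ) :
    ellipse (rePart w) (imPart w) = circleImage (rePartLm d) w := by
  rw [circleImage, ← neg_surjective.range_comp]
  ext x
  simp [ellipse, rePartLm_exp_neg_smul, eq_comm]

/-- If `v_0 ∈ cob{v_1,…,v_N}`, then `E(v_0) ⊆ co{E(v_1),…,E(v_N)}`. -/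
theorem ellipse_subset_of_mem_cob {d N : ℕ} (hN : 0 < N)
    (v : Fin N → (Fin d → ℂ)) (v0 : Fin d → ℂ) (h : v0 ∈ cob v) :
    ellipse (rePart v0) (imPart v0)
      ⊆ convexHull ℝ (⋃ k, ellipse (rePart (v k)) (imPart (v k))) := by
  obtain ⟨z, hz, rfl⟩ := h
  have : Nonempty (Fin N) := Fin.pos_iff_nonempty.1 hN
  simpa only [ellipse_eq_circleImage] using
    circleImage_sum_smul_subset_convexHull (rePartLm d) v hz
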